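/- arXiv:2401.10868 — 2 statements merged into one kernel-verified Lean document; each statement's English description precedes it below -/
import Mathlib

section
/- Let $T \in (0,1]$, $k \geq 2$, and let $\bar K \colon \mathbb{R} \to \mathbb{R}$ be measurable and odd with $\int_0^{2T} \bar K(t)^2\,dt \leq A$ and $\int_0^{2T} |\bar K(t)|\,dt \leq B$. Then $\left| \int_{[0,T]^k} \bar K(s_1 - s_2)\bar K(s_2-s_3)\cdots \bar K(s_{k-1}-s_k)\bar K(s_k - s_1) \, ds_1 \cdots ds_k \right| \leq 2A \cdot T \cdot (2B)^{k-2}$. -/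
/-!
Bound the cyclic integral by the same integral of `‖K̄‖ₑ` and integrate out `s₁` first. The two
factors containing it are handled by AM-GM `2ab ≤ a² + b²`: for `u ∈ [0, T]` the window
`{u - x | x ∈ [0, T]}` lies in `[-T, T]`, so by oddness `∫₀ᵀ K̄(u - x)² dx ≤ 2A`. What remains is
the chain `s₂ → s₃ → ⋯ → s_k`, integrated from its far end: each link contributes
`∫₀ᵀ |K̄(x - z)| dz ≤ 2B`, and the last free variable contributes `T`.
-/

open MeasureTheory intervalIntegral Set
open scoped ENNReal

theorem ENNReal.two_mul_le_add_sq (a b : ℝ≥0∞) : 2 * a * b ≤ a ^ 2 + b ^ 2 := by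
  rcases eq_or_ne a ∞ with rfl | ha
  · simp
  rcases eq_or_ne b ∞ with rfl | hb
  · simp
  lift a to NNReal using ha
  lift b to NNReal using hb
  exact_mod_cast _root_.two_mul_le_add_sq a b

theorem lintegral_mul_le_of_lintegral_sq_le {α : Type*} [MeasurableSpace α] {μ : Measure α}
    {f g : α → ℝ≥0∞} (hf : Measurable f) {c : ℝ≥0∞}
    (hfc : ∫⁻ x, f x ^ 2 ∂μ ≤ c) (hgc : ∫⁻ x, g x ^ 2 ∂μ ≤ c) :
    ∫⁻ x, f x * g x ∂μ ≤ c := by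
  have h2 : 2 * ∫⁻ x, f x * g x ∂μ ≤ 2 * c :=
    calc 2 * ∫⁻ x, f x * g x ∂μ
        = ∫⁻ x, 2 * f x * g x ∂μ := by
          rw [← lintegral_const_mul' _ _ ENNReal.ofNat_ne_top]
          simp only [mul_assoc]
      _ ≤ ∫⁻ x, f x ^ 2 + g x ^ 2 ∂μ := lintegral_mono fun x => ENNReal.two_mul_le_add_sq _ _
      _ = (∫⁻ x, f x ^ 2 ∂μ) + ∫⁻ x, g x ^ 2 ∂μ := lintegral_add_left (hf.pow_const 2) _
      _ ≤ 2 * c := by rw [two_mul]; gcongr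
  exact (ENNReal.mul_le_mul_iff_right two_ne_zero ENNReal.ofNat_ne_top).1 h2

theorem prod_cycle_cons {M β : Type*} [CommMonoid M] {n : ℕ} (f : β → β → M) (x : β)
    (y : Fin (n + 1) → β) :
    ∏ i : Fin (n + 2),
        f ((Fin.cons x y : Fin (n + 2) → β) i) ((Fin.cons x y : Fin (n + 2) → β) (i + 1))
      = f x (y 0) * (∏ j : Fin n, f (y j.castSucc) (y j.succ)) * f (y (Fin.last n)) x := by
  rw [Fin.prod_univ_succ, Fin.prod_univ_castSucc, mul_assoc]
  simp only [Fin.cons_zero, Fin.cons_succ, zero_add]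
  simp only [Fin.succ_castSucc, Fin.coeSucc_eq_succ, Fin.succ_last, Fin.last_add_one]
  simp only [← Fin.succ_zero_eq_one, Fin.cons_succ, Fin.cons_zero]

section KernelCycles

variable {α : Type*} [MeasurableSpace α] {μ : Measure α} [SigmaFinite μ]

theorem lintegral_pi_fin_succ {m : ℕ} {F : (Fin (m + 1) → α) → ℝ≥0∞} (hF : Measurable F) :
    ∫⁻ s, F s ∂Measure.pi (fun _ => μ)
      = ∫⁻ x, ∫⁻ y, F (Fin.cons x y) ∂Measure.pi (fun _ => μ) ∂μ := by
  rw [← (measurePreserving_piFinSuccAbove (fun _ => μ) 0).symm.lintegral_comp hF,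
    lintegral_prod (fun p => F ((MeasurableEquiv.piFinSuccAbove (fun _ => α) 0).symm p))
      (hF.comp (MeasurableEquiv.measurable _)).aemeasurable]
  simp only [MeasurableEquiv.piFinSuccAbove_symm_apply, Fin.insertNthEquiv_zero]
  rfl

variable {κ : α → α → ℝ≥0∞} {β : ℝ≥0∞}

theorem lintegral_chain_le (hκ : Measurable (Function.uncurry κ))
    (hβ : ∀ᵐ x ∂μ, ∫⁻ z, κ x z ∂μ ≤ β) (m : ℕ) {g : α → ℝ≥0∞} (hg : Measurable g) :
    ∫⁻ s, g (s 0) * ∏ j : Fin m, κ (s j.castSucc) (s j.succ) ∂Measure.pi (fun _ => μ)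
      ≤ (∫⁻ x, g x ∂μ) * β ^ m := by
  induction m generalizing g with
  | zero =>
    rw [lintegral_pi_fin_succ (by fun_prop)]
    simp
  | succ m ih =>
    rw [lintegral_pi_fin_succ (by fun_prop)]
    calc _ = ∫⁻ x, g x * ∫⁻ y, κ x (y 0) * ∏ j : Fin m, κ (y j.castSucc) (y j.succ)
            ∂Measure.pi (fun _ => μ) ∂μ := by
          refine lintegral_congr fun x => ?_
          rw [← lintegral_const_mul _ (by fun_prop)]
          simp only [Fin.prod_univ_succ, Fin.castSucc_zero, Fin.cons_zero, ← Fin.succ_castSucc,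
            Fin.cons_succ]
      _ ≤ ∫⁻ x, g x * (β * β ^ m) ∂μ := by
          refine lintegral_mono_ae (hβ.mono fun x hx => ?_)
          gcongr
          exact (ih (by fun_prop)).trans (by gcongr)
      _ = (∫⁻ x, g x ∂μ) * β ^ (m + 1) := by
          rw [lintegral_mul_const _ hg, pow_succ']

theorem lintegral_cycle_le (hκ : Measurable (Function.uncurry κ)) {s : Set α}
    (hs : ∀ᵐ x ∂μ, x ∈ s) (hβ : ∀ x ∈ s, ∫⁻ z, κ x z ∂μ ≤ β) {γ : ℝ≥0∞}
    (hγ : ∀ u ∈ s, ∀ v ∈ s, ∫⁻ x, κ u x * κ x v ∂μ ≤ γ) (n : ℕ) :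
    ∫⁻ t, ∏ i : Fin (n + 2), κ (t i) (t (i + 1)) ∂Measure.pi (fun _ => μ)
      ≤ γ * μ univ * β ^ n := by
  have hmem : ∀ᵐ y ∂Measure.pi (fun _ : Fin (n + 1) => μ), ∀ i, y i ∈ s :=
    ae_all_iff.2 fun _ => Measure.tendsto_eval_ae_ae.eventually hs
  rw [lintegral_pi_fin_succ (by fun_prop)]
  simp only [prod_cycle_cons]
  rw [lintegral_lintegral_swap (by fun_prop)]
  calc _ = ∫⁻ y, (∫⁻ x, κ (y (Fin.last n)) x * κ x (y 0) ∂μ) *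
              ∏ j : Fin n, κ (y j.castSucc) (y j.succ) ∂Measure.pi (fun _ => μ) := by
        refine lintegral_congr fun y => ?_
        rw [← lintegral_mul_const _ (by fun_prop)]
        exact lintegral_congr fun x => by ring
    _ ≤ ∫⁻ y, γ * (1 * ∏ j : Fin n, κ (y j.castSucc) (y j.succ)) ∂Measure.pi (fun _ => μ) := by
        refine lintegral_mono_ae (hmem.mono fun y hy => ?_)
        rw [one_mul]
        gcongr
        exact hγ _ (hy _) _ (hy _)
    _ ≤ γ * ((∫⁻ _, 1 ∂μ) * β ^ n) := by
        rw [lintegral_const_mul _ (by fun_prop)]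
        gcongr
        exact lintegral_chain_le hκ (hs.mono hβ) n measurable_const
    _ = γ * μ univ * β ^ n := by rw [lintegral_one, mul_assoc]

end KernelCycles

theorem setLIntegral_Icc_comp_const_sub (f : ℝ → ℝ≥0∞) (c a b : ℝ) :
    ∫⁻ z in Icc a b, f (c - z) = ∫⁻ u in Icc (c - b) (c - a), f u := by
  rw [(Measure.measurePreserving_sub_left volume c).setLIntegral_comp_emb
    (MeasurableEquiv.subLeft c).measurableEmbedding, image_const_sub_Icc]

theorem setLIntegral_Icc_comp_sub_le_two_mul {f : ℝ → ℝ≥0∞} (hf : ∀ t, f (-t) = f t)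
    {T : ℝ} {C : ℝ≥0∞} (hC : ∫⁻ t in Icc 0 T, f t ≤ C) {x : ℝ} (hx : x ∈ Icc 0 T) :
    ∫⁻ z in Icc 0 T, f (x - z) ≤ 2 * C := by
  have hT : 0 ≤ T := hx.1.trans hx.2
  have hreflect : ∫⁻ u in Icc (-T) 0, f u = ∫⁻ u in Icc 0 T, f u := by
    simpa [hf] using (setLIntegral_Icc_comp_const_sub f 0 0 T).symm
  calc ∫⁻ z in Icc 0 T, f (x - z) = ∫⁻ u in Icc (x - T) (x - 0), f u :=
        setLIntegral_Icc_comp_const_sub f x 0 T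
    _ ≤ ∫⁻ u in Icc (-T) 0 ∪ Icc 0 T, f u := by
        rw [Icc_union_Icc_eq_Icc (neg_nonpos.2 hT) hT]
        exact lintegral_mono_set (Icc_subset_Icc (by linarith [hx.1]) (by linarith [hx.2]))
    _ ≤ (∫⁻ u in Icc (-T) 0, f u) + ∫⁻ u in Icc 0 T, f u := lintegral_union_le _ _ _
    _ ≤ 2 * C := by rw [hreflect, ← two_mul]; gcongr

theorem lintegral_cycle_Icc_le {L : ℝ → ℝ≥0∞} (hL : Measurable L) (heven : ∀ t, L (-t) = L t)
    {T : ℝ} {a b : ℝ≥0∞} (ha : ∫⁻ t in Icc 0 T, L t ^ 2 ≤ a) (hb : ∫⁻ t in Icc 0 T, L t ≤ b)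
    (n : ℕ) :
    ∫⁻ s, ∏ i : Fin (n + 2), L (s i - s (i + 1)) ∂Measure.pi (fun _ => volume.restrict (Icc 0 T))
      ≤ 2 * a * ENNReal.ofReal T * (2 * b) ^ n := by
  have hslice_sq {u : ℝ} (hu : u ∈ Icc 0 T) : ∫⁻ x in Icc 0 T, L (u - x) ^ 2 ≤ 2 * a :=
    setLIntegral_Icc_comp_sub_le_two_mul (fun t => by rw [heven]) ha hu
  have hcycle := lintegral_cycle_le (μ := volume.restrict (Icc 0 T)) (κ := fun u x => L (u - x))
    (by fun_prop) (ae_restrict_mem measurableSet_Icc)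
    (fun x hx => setLIntegral_Icc_comp_sub_le_two_mul heven hb hx)
    (fun u hu v hv => lintegral_mul_le_of_lintegral_sq_le (by fun_prop) (hslice_sq hu) <| by
      simpa only [← neg_sub v, heven] using hslice_sq hv) n
  simpa using hcycle

theorem setLIntegral_Icc_ofReal_le {f : ℝ → ℝ} {T b c : ℝ} (hb : 0 ≤ b) (hTb : T ≤ b)
    (hf : IntervalIntegrable f volume 0 b) (hf0 : ∀ t, 0 ≤ f t) (hc : ∫ t in 0..b, f t ≤ c) :
    ∫⁻ t in Icc 0 T, ENNReal.ofReal (f t) ≤ ENNReal.ofReal c := by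
  refine (lintegral_mono_set (Icc_subset_Icc le_rfl hTb)).trans ?_
  rw [← ofReal_integral_eq_lintegral_ofReal ((integrableOn_Icc_iff_integrableOn_Ioc).2 hf.1)
    (Filter.Eventually.of_forall hf0), integral_Icc_eq_integral_Ioc, ← integral_of_le hb]
  exact ENNReal.ofReal_le_ofReal hc

theorem stmt9_general (T A B : ℝ) (hT : 0 < T) (n : ℕ)
    (K : ℝ → ℝ) (hK : Measurable K) (hodd : ∀ t, K (-t) = -K t)
    (hA2 : IntervalIntegrable (fun t => K t ^ 2) volume 0 (2*T))
    (hB1 : IntervalIntegrable (fun t => |K t|) volume 0 (2*T))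
    (hA : (∫ t in (0:ℝ)..(2*T), K t ^ 2) ≤ A)
    (hB : (∫ t in (0:ℝ)..(2*T), |K t|) ≤ B) :
    |∫ s : Fin (n+2) → ℝ in Set.univ.pi (fun _ => Set.Icc (0:ℝ) T),
        ∏ i : Fin (n+2), K (s i - s (i + 1))|
      ≤ 2 * A * T * (2 * B) ^ n := by
  have h2T : 0 ≤ 2 * T := by positivity
  have hA0 : 0 ≤ A := (integral_nonneg h2T fun _ _ => sq_nonneg _).trans hA
  have hB0 : 0 ≤ B := (integral_nonneg h2T fun _ _ => abs_nonneg _).trans hB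
  have hsq : ∫⁻ t in Icc 0 T, ‖K t‖ₑ ^ 2 ≤ ENNReal.ofReal A := by
    simpa only [Real.enorm_eq_ofReal_abs, ← ENNReal.ofReal_pow (abs_nonneg _), sq_abs] using
      setLIntegral_Icc_ofReal_le h2T (by linarith) hA2 (fun _ => sq_nonneg _) hA
  have habs : ∫⁻ t in Icc 0 T, ‖K t‖ₑ ≤ ENNReal.ofReal B := by
    simpa only [Real.enorm_eq_ofReal_abs] using
      setLIntegral_Icc_ofReal_le h2T (by linarith) hB1 (fun _ => abs_nonneg _) hB
  have hbound := lintegral_cycle_Icc_le (L := fun t => ‖K t‖ₑ) (by fun_prop)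
    (fun t => by rw [hodd, enorm_neg]) hsq habs n
  rw [← Measure.restrict_pi_pi, ← volume_pi] at hbound
  have hrhs : 2 * ENNReal.ofReal A * ENNReal.ofReal T * (2 * ENNReal.ofReal B) ^ n
      = ENNReal.ofReal (2 * A * T * (2 * B) ^ n) := by
    rw [ENNReal.ofReal_mul (by positivity), ENNReal.ofReal_pow (by positivity),
      ENNReal.ofReal_mul (by positivity), ENNReal.ofReal_mul (by positivity),
      ENNReal.ofReal_mul (by positivity), ENNReal.ofReal_ofNat]
  rw [← Real.norm_eq_abs, ← ENNReal.ofReal_le_ofReal_iff (by positivity), ofReal_norm, ← hrhs]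
  refine (enorm_integral_le_lintegral_enorm _).trans (le_of_eq_of_le ?_ hbound)
  simp [enorm_eq_nnnorm]

/-- The cycle estimate: for an odd kernel `K̄` with `∫₀^{2T} K̄² ≤ A` and
`∫₀^{2T} |K̄| ≤ B`, the cyclic integral of `k = n+2 ≥ 2` kernel factors over `[0,T]^k`
is bounded by `2·A·T·(2B)^{k-2}`. -/
theorem stmt9 (T A B : ℝ) (hT : 0 < T) (hT1 : T ≤ 1) (n : ℕ)
    (K : ℝ → ℝ) (hK : Measurable K) (hodd : ∀ t, K (-t) = -K t)
    (hA2 : IntervalIntegrable (fun t => K t ^ 2) volume 0 (2*T))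
    (hB1 : IntervalIntegrable (fun t => |K t|) volume 0 (2*T))
    (hA : (∫ t in (0:ℝ)..(2*T), K t ^ 2) ≤ A)
    (hB : (∫ t in (0:ℝ)..(2*T), |K t|) ≤ B) :
    |∫ s : Fin (n+2) → ℝ in Set.univ.pi (fun _ => Set.Icc (0:ℝ) T),
        ∏ i : Fin (n+2), K (s i - s (i + 1))|
      ≤ 2 * A * T * (2 * B) ^ n :=
  stmt9_general T A B hT n K hK hodd hA2 hB1 hA hB
end

section
/- Let $P$ be a finite 'linear' poset (every element of $P^\circ = P \setminus (P^\top \cup P^\bot)$ has a unique immediate predecessor and unique immediate successor) and let $G$ be a pairing of $P^\circ$ (a partition of $P^\circ$ into two-element sets). Say $G$ is parallel if there exists a pairing $H$ of the edges of $G$ such that each pair $\{\{e_1,e_2\},\{f_1,f_2\}\} \in H$ satisfies, after relabelling, $f_1 \in \{e_1^{\uparrow}, e_1^{\downarrow}\}$ and $f_2 \in \{e_2^{\uparrow}, e_2^{\downarrow}\}$. Then if $G$ is parallel, the pairing $H$ witnessing this is unique. -/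
/-- `G` is a pairing of `S`: a partition of `S` into two-element subsets. -/
def IsPairing {α : Type*} (S : Set α) (G : Set (Set α)) : Prop :=
  (∀ g ∈ G, ∃ a b, a ≠ b ∧ g = {a, b} ∧ a ∈ S ∧ b ∈ S) ∧
  (∀ x ∈ S, ∃! g, g ∈ G ∧ x ∈ g)

/-- Uniqueness of the parallel-pairing witness: let `P` be a finite "linear" poset
(every interior point has a unique immediate predecessor and successor, `⋖` being the
covering relation), let `G` be a pairing of the interior `P°`.  A witness of parallelism
is a pairing `H` of `G` such that each pair `{e,f} ∈ H` can be written `e = {e₁,e₂}`,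
`f = {f₁,f₂}` with `f₁` covering or covered by `e₁` and `f₂` covering or covered by `e₂`.
If such a witness exists, it is unique. -/
theorem stmt11 {P : Type*} [PartialOrder P] [Fintype P]
    (interior : Set P) (hint : interior = {v | (∃ w, v < w) ∧ ∃ w, w < v})
    (hlin : ∀ v ∈ interior, (∃! w, v ⋖ w) ∧ (∃! w, w ⋖ v))
    (G : Set (Set P)) (hG : IsPairing interior G)
    (H H' : Set (Set (Set P)))
    (hH : IsPairing G H) (hH' : IsPairing G H')
    (hpar : ∀ h ∈ H, ∃ e₁ e₂ f₁ f₂ : P,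
      h = {{e₁, e₂}, {f₁, f₂}} ∧ ({e₁, e₂} : Set P) ≠ {f₁, f₂} ∧
      (e₁ ⋖ f₁ ∨ f₁ ⋖ e₁) ∧ (e₂ ⋖ f₂ ∨ f₂ ⋖ e₂))
    (hpar' : ∀ h ∈ H', ∃ e₁ e₂ f₁ f₂ : P,
      h = {{e₁, e₂}, {f₁, f₂}} ∧ ({e₁, e₂} : Set P) ≠ {f₁, f₂} ∧
      (e₁ ⋖ f₁ ∨ f₁ ⋖ e₁) ∧ (e₂ ⋖ f₂ ∨ f₂ ⋖ e₂)) :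
    H = H' := by
  have memG : ∀ {h g}, h ∈ H → g ∈ h → g ∈ G := by
    intro h g hh hg
    obtain ⟨a, b, -, rfl, ha, hb⟩ := hH.1 h hh
    rcases hg with rfl | rfl <;> assumption
  have memG' : ∀ {h g}, h ∈ H' → g ∈ h → g ∈ G := by
    intro h g hh hg
    obtain ⟨a, b, -, rfl, ha, hb⟩ := hH'.1 h hh
    rcases hg with rfl | rfl <;> assumption
  have memInt : ∀ {g x}, g ∈ G → x ∈ g → x ∈ interior := by
    intro g x hg hx
    obtain ⟨a, b, -, rfl, ha, hb⟩ := hG.1 g hg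
    rcases hx with rfl | rfl <;> assumption
  have extract : ∀ (K : Set (Set (Set P))),
      (∀ h ∈ K, ∃ e₁ e₂ f₁ f₂ : P,
        h = {{e₁, e₂}, {f₁, f₂}} ∧ ({e₁, e₂} : Set P) ≠ {f₁, f₂} ∧
        (e₁ ⋖ f₁ ∨ f₁ ⋖ e₁) ∧ (e₂ ⋖ f₂ ∨ f₂ ⋖ e₂)) →
      ∀ {h e v}, h ∈ K → e ∈ h → v ∈ e →
        ∃ f x, h = {e, f} ∧ e ≠ f ∧ x ∈ f ∧ (v ⋖ x ∨ x ⋖ v) := by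
    intro K hpK h e v hh he hv
    obtain ⟨e₁, e₂, f₁, f₂, hhe, hne, c1, c2⟩ := hpK h hh
    subst hhe
    rcases he with rfl | rfl
    · rcases hv with rfl | rfl
      · exact ⟨{f₁, f₂}, f₁, rfl, hne, Or.inl rfl, c1⟩
      · exact ⟨{f₁, f₂}, f₂, rfl, hne, Or.inr rfl, c2⟩
    · rcases hv with rfl | rfl
      · exact ⟨{e₁, e₂}, e₁, Set.pair_comm _ _, hne.symm, Or.inl rfl, c1.symm⟩
      · exact ⟨{e₁, e₂}, e₂, Set.pair_comm _ _, hne.symm, Or.inr rfl, c2.symm⟩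
  have key : ∀ v : P, v ∈ interior → ∀ e h h', e ∈ G → h ∈ H → h' ∈ H' →
      e ∈ h → e ∈ h' → v ∈ e → h = h' := by
    intro v
    induction v using WellFoundedLT.induction with
    | _ v IH =>
    intro hv e h h' heG hh hh' heh heh' hve
    obtain ⟨f, x, hhef, hef, hxf, hcov⟩ := extract H hpar hh heh hve
    obtain ⟨f', x', hhef', hef', hxf', hcov'⟩ := extract H' hpar' hh' heh' hve
    have hfG : f ∈ G := memG hh (by rw [hhef]; exact Set.mem_insert_of_mem _ rfl)
    have hf'G : f' ∈ G := memG' hh' (by rw [hhef']; exact Set.mem_insert_of_mem _ rfl)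
    rcases hcov with hvx | hxv
    · rcases hcov' with hvx' | hx'v
      · have hx : x = x' := by
          obtain ⟨⟨w, hw1, hw2⟩, -⟩ := hlin v hv
          rw [hw2 x hvx, hw2 x' hvx']
        subst hx
        have hff : f = f' := by
          have hxint : x ∈ interior := memInt hfG hxf
          obtain ⟨g, -, hg⟩ := hG.2 x hxint
          rw [hg f ⟨hfG, hxf⟩, hg f' ⟨hf'G, hxf'⟩]
        rw [hhef, hhef', hff]
      · obtain ⟨p, ⟨hpH, hfp⟩, -⟩ := hH.2 f' hf'G
        have hx'int : x' ∈ interior := memInt hf'G hxf'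
        have hph' : p = h' := IH x' hx'v.lt hx'int f' p h' hf'G hpH hh' hfp
          (by rw [hhef']; exact Set.mem_insert_of_mem _ rfl) hxf'
        have hep : e ∈ p := by rw [hph', hhef']; exact Set.mem_insert _ _
        obtain ⟨q, -, hq⟩ := hH.2 e heG
        rw [hq h ⟨hh, heh⟩, ← hq p ⟨hpH, hep⟩, hph']
    · obtain ⟨p, ⟨hpH', hfp⟩, -⟩ := hH'.2 f hfG
      have hxint : x ∈ interior := memInt hfG hxf
      have hhp : h = p := IH x hxv.lt hxint f h p hfG hh hpH'
        (by rw [hhef]; exact Set.mem_insert_of_mem _ rfl) hfp hxf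
      have hep : e ∈ p := by rw [← hhp, hhef]; exact Set.mem_insert _ _
      obtain ⟨q, -, hq⟩ := hH'.2 e heG
      rw [hhp, hq p ⟨hpH', hep⟩, hq h' ⟨hh', heh'⟩]
  ext h
  constructor
  · intro hh
    obtain ⟨a, b, hab, hhe, haG, hbG⟩ := hH.1 h hh
    obtain ⟨p, q, hpq, hae, hpI, hqI⟩ := hG.1 a haG
    obtain ⟨h'', ⟨hh''H', hah''⟩, -⟩ := hH'.2 a haG
    have : h = h'' := key p hpI a h h'' haG hh hh''H'
      (by rw [hhe]; exact Set.mem_insert _ _) hah''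
      (by rw [hae]; exact Set.mem_insert _ _)
    rw [this]; exact hh''H'
  · intro hh
    obtain ⟨a, b, hab, hhe, haG, hbG⟩ := hH'.1 h hh
    obtain ⟨p, q, hpq, hae, hpI, hqI⟩ := hG.1 a haG
    obtain ⟨h'', ⟨hh''H, hah''⟩, -⟩ := hH.2 a haG
    have : h'' = h := key p hpI a h'' h haG hh''H hh hah''
      (by rw [hhe]; exact Set.mem_insert _ _)
      (by rw [hae]; exact Set.mem_insert _ _)
    rw [← this]; exact hh''H
end
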